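/- arXiv:1904.13006 — 5 statements merged into one kernel-verified Lean document; each statement's English description precedes it below -/
import Mathlib

section
/- Let ι be a finite set of items with a value function v : ι → ℝ satisfying v i ≥ 0 for all i, and a cost function c : ι → ℝ satisfying c i > 0 for all i. Let i_1, …, i_N be an enumeration of ι in nonincreasing value-to-cost-ratio order, i.e., v(i_1)/c(i_1) ≥ v(i_2)/c(i_2) ≥ … ≥ v(i_N)/c(i_N). Let P = {i_1, …, i_k} be a prefix of this order (possibly empty) and set t = cost(P). Then every subset S ⊆ ι with cost(S) ≤ t satisfies value(S) ≤ 2 · value(P); equivalently, opt(t) ≤ 2 · value(P). -/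
/-- Knapsack: a greedy prefix `P` (w.r.t. nonincreasing value-to-cost ratio order)
of total cost `t` is a 2-approximation: every subset of cost at most `t` has value
at most `2 · value(P)`. -/
theorem greedy_prefix_two_approx
    {ι : Type*} [DecidableEq ι] {N : ℕ} (e : Fin N ≃ ι)
    (v c : ι → ℝ) (hv : ∀ i, 0 ≤ v i) (hc : ∀ i, 0 < c i)
    (hord : ∀ a b : Fin N, a ≤ b → v (e b) / c (e b) ≤ v (e a) / c (e a))
    (k : ℕ) (hk : k ≤ N)
    (P : Finset ι) (hP : P = (Finset.univ.filter fun a : Fin N => (a : ℕ) < k).image e)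
    (t : ℝ) (ht : t = ∑ i ∈ P, c i)
    (S : Finset ι) (hS : ∑ i ∈ S, c i ≤ t) :
    ∑ i ∈ S, v i ≤ 2 * ∑ i ∈ P, v i := by
  have hmemP : ∀ i : ι, i ∈ P ↔ ((e.symm i : ℕ) < k) := by
    intro i
    subst hP
    simp only [Finset.mem_image, Finset.mem_filter, Finset.mem_univ, true_and]
    constructor
    · rintro ⟨a, ha, rfl⟩; simpa using ha
    · intro h; exact ⟨e.symm i, h, e.apply_symm_apply i⟩
  have hPv_nonneg : 0 ≤ ∑ i ∈ P, v i := Finset.sum_nonneg fun i _ => hv i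
  have h1 : ∑ i ∈ S ∩ P, v i ≤ ∑ i ∈ P, v i :=
    Finset.sum_le_sum_of_subset_of_nonneg Finset.inter_subset_right
      (fun i _ _ => hv i)
  have h2 : ∑ i ∈ S \ P, v i ≤ ∑ i ∈ P, v i := by
    rcases Finset.eq_empty_or_nonempty (S \ P) with hem | ⟨i0, hi0⟩
    · rw [hem]; simpa using hPv_nonneg
    · have hkN : k < N := by
        have := (Finset.mem_sdiff.mp hi0).2
        have h := (hmemP i0).not.mp this
        have : k ≤ (e.symm i0 : ℕ) := le_of_not_gt h
        exact lt_of_le_of_lt this (e.symm i0).isLt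
      set K : Fin N := ⟨k, hkN⟩
      set r : ℝ := v (e K) / c (e K) with hr
      have hr0 : 0 ≤ r := div_nonneg (hv _) (le_of_lt (hc _))
      have hA : ∀ i ∈ S \ P, v i ≤ r * c i := by
        intro i hi
        have hnotP := (Finset.mem_sdiff.mp hi).2
        have hKle : K ≤ e.symm i := by
          have := (hmemP i).not.mp hnotP
          exact Fin.mk_le_of_le_val (le_of_not_gt this)
        have := hord K (e.symm i) hKle
        rw [e.apply_symm_apply] at this
        calc v i = (v i / c i) * c i := (div_mul_cancel₀ (v i) (ne_of_gt (hc i))).symm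
          _ ≤ r * c i := by
              apply mul_le_mul_of_nonneg_right this (le_of_lt (hc i))
      have hB : ∀ j ∈ P, r * c j ≤ v j := by
        intro j hj
        have hjk : (e.symm j : ℕ) < k := (hmemP j).mp hj
        have hle : e.symm j ≤ K := Fin.mk_le_of_le_val (le_of_lt hjk)
        have := hord (e.symm j) K hle
        rw [e.apply_symm_apply] at this
        calc r * c j ≤ (v j / c j) * c j :=
              mul_le_mul_of_nonneg_right this (le_of_lt (hc j))
          _ = v j := div_mul_cancel₀ (v j) (ne_of_gt (hc j))
      have hcostS : ∑ i ∈ S \ P, c i ≤ t := by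
        refine le_trans ?_ hS
        exact Finset.sum_le_sum_of_subset_of_nonneg Finset.sdiff_subset
          (fun i _ _ => le_of_lt (hc i))
      calc ∑ i ∈ S \ P, v i ≤ ∑ i ∈ S \ P, r * c i := Finset.sum_le_sum hA
        _ = r * ∑ i ∈ S \ P, c i := by rw [Finset.mul_sum]
        _ ≤ r * t := mul_le_mul_of_nonneg_left hcostS hr0
        _ = ∑ j ∈ P, r * c j := by rw [ht, Finset.mul_sum]
        _ ≤ ∑ j ∈ P, v j := Finset.sum_le_sum hB
  have hsplit : ∑ i ∈ S ∩ P, v i + ∑ i ∈ S \ P, v i = ∑ i ∈ S, v i :=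
    Finset.sum_inter_add_sum_sdiff S P v
  linarith
end

section
/- Let ι be a finite set of root-to-leaf paths with probability function p : ι → ℝ satisfying p i ≥ 0 for all i and ∑_{i∈ι} p i = 1, and refinement-cost function c : ι → ℝ satisfying c i > 0 for all i. Let i_1, …, i_N be an enumeration of ι in nonincreasing p-to-c-ratio order, let P = {i_1, …, i_k} be a prefix of this order, and set t = cost(P) (the time at which the refinement of the k-th path completes, assuming paths are refined greedily in ratio order with accurate, constant costs). Then the total probability of unrefined paths satisfies ∑_{i ∉ P} p i ≤ 1 − opt(t)/2, where opt(t) = max { ∑_{i∈S} p i : S ⊆ ι, ∑_{i∈S} c i ≤ t } is the best possible probability mass coverable with refinement budget t. -/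
/-- Theorem 1 of the paper: if root-to-leaf paths are refined greedily in
nonincreasing probability-to-cost ratio order, then at the time `t` at which the
`k`-th refinement completes, the total probability of unrefined paths is at most
`1 − opt(t)/2`, where `opt(t)` is the best probability mass coverable with budget `t`. -/
theorem atm_mdp_anytime
    {ι : Type*} [Fintype ι] [DecidableEq ι] {N : ℕ} (e : Fin N ≃ ι)
    (p c : ι → ℝ) (hp : ∀ i, 0 ≤ p i) (hp1 : ∑ i, p i = 1) (hc : ∀ i, 0 < c i)
    (hord : ∀ a b : Fin N, a ≤ b → p (e b) / c (e b) ≤ p (e a) / c (e a))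
    (k : ℕ) (hk : k ≤ N)
    (P : Finset ι) (hP : P = (Finset.univ.filter fun a : Fin N => (a : ℕ) < k).image e)
    (t : ℝ) (ht : t = ∑ i ∈ P, c i) :
    ∑ i ∈ Pᶜ, p i ≤
      1 - (sSup {x : ℝ | ∃ S : Finset ι, ∑ i ∈ S, c i ≤ t ∧ x = ∑ i ∈ S, p i}) / 2 := by
  set V : ℝ := ∑ i ∈ P, p i with hV
  have hV0 : 0 ≤ V := Finset.sum_nonneg fun i _ => hp i
  -- membership in P is exactly having index < k
  have hmemP : ∀ i : ι, i ∈ P ↔ ((e.symm i : Fin N) : ℕ) < k := by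
    intro i
    rw [hP]
    constructor
    · intro hi
      obtain ⟨a, ha, rfl⟩ := Finset.mem_image.mp hi
      simpa using (Finset.mem_filter.mp ha).2
    · intro hi
      exact Finset.mem_image.mpr ⟨e.symm i, Finset.mem_filter.mpr ⟨Finset.mem_univ _, hi⟩,
        by simp⟩
  have hsup : sSup {x : ℝ | ∃ S : Finset ι, ∑ i ∈ S, c i ≤ t ∧ x = ∑ i ∈ S, p i} ≤ 2 * V := by
    apply Real.sSup_le
    · rintro x ⟨S, hSc, rfl⟩
      have h1 : ∑ i ∈ S ∩ P, p i ≤ V :=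
        Finset.sum_le_sum_of_subset_of_nonneg Finset.inter_subset_right
          (fun i _ _ => hp i)
      have hsplit : ∑ i ∈ S ∩ P, p i + ∑ i ∈ S \ P, p i = ∑ i ∈ S, p i :=
        Finset.sum_inter_add_sum_sdiff S P p
      have h2 : ∑ i ∈ S \ P, p i ≤ V := by
        rcases (S \ P).eq_empty_or_nonempty with hSP | hSP
        · simp [hSP, hV0]
        · -- P must be nonempty, in particular k ≥ 1
          obtain ⟨i0, hi0⟩ := hSP
          have hi0S : i0 ∈ S := (Finset.mem_sdiff.mp hi0).1
          have htpos : 0 < t := by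
            refine lt_of_lt_of_le ?_ hSc
            exact Finset.sum_pos' (fun i _ => (hc i).le) ⟨i0, hi0S, hc i0⟩
          have hk1 : 1 ≤ k := by
            by_contra hk0
            have : k = 0 := by omega
            have hPe : P = ∅ := by
              rw [hP, this]; simp
            rw [ht, hPe] at htpos; simp at htpos
          have hkN : k - 1 < N := by omega
          set j : Fin N := ⟨k - 1, hkN⟩ with hj
          set r : ℝ := p (e j) / c (e j) with hr
          have hr0 : 0 ≤ r := div_nonneg (hp _) (hc _).le
          have hbound : ∀ i ∈ S \ P, p i ≤ r * c i := by
            intro i hi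
            have hiP : i ∉ P := (Finset.mem_sdiff.mp hi).2
            have hidx : k ≤ ((e.symm i : Fin N) : ℕ) := by
              by_contra h
              exact hiP ((hmemP i).mpr (by omega))
            have hja : j ≤ e.symm i := by
              simp only [Fin.le_def, hj]; omega
            have := hord j (e.symm i) hja
            rw [Equiv.apply_symm_apply] at this
            calc p i = (p i / c i) * c i := (div_mul_cancel₀ _ (hc i).ne').symm
              _ ≤ r * c i := mul_le_mul_of_nonneg_right this (hc i).le
          have hcost : ∑ i ∈ S \ P, c i ≤ t :=
            le_trans (Finset.sum_le_sum_of_subset_of_nonneg (Finset.sdiff_subset)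
              (fun i _ _ => (hc i).le)) hSc
          have hrt : r * t ≤ V := by
            rw [ht, Finset.mul_sum]
            apply Finset.sum_le_sum
            intro i hi
            have hidx : ((e.symm i : Fin N) : ℕ) < k := (hmemP i).mp hi
            have haj : e.symm i ≤ j := by
              simp only [Fin.le_def, hj]; omega
            have := hord (e.symm i) j haj
            rw [Equiv.apply_symm_apply] at this
            calc r * c i ≤ (p i / c i) * c i :=
                  mul_le_mul_of_nonneg_right this (hc i).le
              _ = p i := div_mul_cancel₀ _ (hc i).ne'
          calc ∑ i ∈ S \ P, p i ≤ ∑ i ∈ S \ P, r * c i := Finset.sum_le_sum hbound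
            _ = r * ∑ i ∈ S \ P, c i := by rw [Finset.mul_sum]
            _ ≤ r * t := mul_le_mul_of_nonneg_left hcost hr0
            _ ≤ V := hrt
      linarith
    · positivity
  have hcompl : V + ∑ i ∈ Pᶜ, p i = 1 := by
    rw [hV, Finset.sum_add_sum_compl, hp1]
  linarith
end

section
/- Fix h : ℕ and δ ∈ (0,1]. Let K : Fin (h+1) → PMF (Fin (h+1)) be a Markov kernel on the states {0, 1, …, h} such that (i) the chain never decreases: for all states k and k', if k' < k then (K k) k' = 0; and (ii) the chain is δ-progressive below h: for every state k < h, the total probability under K k of the set of states strictly greater than k is at least δ. Let μ_0 = pure 0 and μ_{n+1} = μ_n.bind K be the distribution of the chain after n steps started at state 0. Then μ_n(h) → 1 as n → ∞; i.e., the chain reaches the absorbing top state h with probability tending to 1. -/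
/-!
The distance `h - k` to the top state is a Lyapunov function: since the chain never moves down
and moves up with probability at least `δ` from every state below `h`, its expected value drops
by at least `δ` per step while the chain is below `h`. Summing these drifts bounds the expected
time spent below `h` by `h / δ`, so `P(X_n ≠ h)` is summable and hence tends to `0`.
-/

open scoped ENNReal

namespace PMF

variable {α β : Type*}

theorem tsum_bind_mul (p : PMF α) (K : α → PMF β) (φ : β → ℝ≥0∞) :
    ∑' b, p.bind K b * φ b = ∑' a, p a * ∑' b, K a b * φ b := by
  simp_rw [bind_apply, ← ENNReal.tsum_mul_right, ← ENNReal.tsum_mul_left, mul_assoc]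
  exact ENNReal.tsum_comm

theorem tsum_bind_mul_add_le_of_drift (p : PMF α) {K : α → PMF α} {φ g : α → ℝ≥0∞}
    (hdrift : ∀ a, ∑' b, K a b * φ b + g a ≤ φ a) :
    ∑' b, p.bind K b * φ b + ∑' a, p a * g a ≤ ∑' a, p a * φ a := by
  rw [tsum_bind_mul, ← ENNReal.tsum_add]
  gcongr with a
  rw [← mul_add]
  gcongr
  exact hdrift a

theorem tsum_tsum_mul_le_of_drift {μ : ℕ → PMF α} {K : α → PMF α} {φ g : α → ℝ≥0∞}
    (hμ : ∀ n, μ (n + 1) = (μ n).bind K) (hdrift : ∀ a, ∑' b, K a b * φ b + g a ≤ φ a) :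
    ∑' n, ∑' a, μ n a * g a ≤ ∑' a, μ 0 a * φ a := by
  have hpartial : ∀ n, ∑ m ∈ Finset.range n, ∑' a, μ m a * g a + ∑' a, μ n a * φ a ≤
      ∑' a, μ 0 a * φ a := by
    intro n
    induction n with
    | zero => simp
    | succ n ih =>
      calc ∑ m ∈ Finset.range (n + 1), ∑' a, μ m a * g a + ∑' a, μ (n + 1) a * φ a
          = ∑ m ∈ Finset.range n, ∑' a, μ m a * g a +
              (∑' a, (μ n).bind K a * φ a + ∑' a, μ n a * g a) := by
            rw [Finset.sum_range_succ, hμ]; ring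
        _ ≤ ∑' a, μ 0 a * φ a := by
            grw [(μ n).tsum_bind_mul_add_le_of_drift hdrift]
            exact ih
  exact ENNReal.tsum_le_of_sum_range_le fun n => le_of_add_le_left (hpartial n)

theorem tsum_mul_ite_eq_mul_one_sub [DecidableEq α] (p : PMF α) (x : α) (c : ℝ≥0∞) :
    ∑' a, p a * (if a = x then 0 else c) = c * (1 - p x) := by
  have hmass : ∑' a, (if a = x then 0 else p a) = 1 - p x :=
    ENNReal.eq_sub_of_add_eq (p.apply_ne_top x)
      (by rw [add_comm, ← ENNReal.summable.tsum_eq_add_tsum_ite' x, p.tsum_coe])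
  rw [← hmass, ← ENNReal.tsum_mul_left]
  congr 1 with a
  split_ifs <;> simp [mul_comm]

theorem tsum_mul_add_sum_gt_le_of_strictAnti [Fintype α] [LinearOrder α] (P : PMF α)
    {k : α} (hmono : ∀ k', k' < k → P k' = 0) {φ : α → ℕ} (hφ : StrictAnti φ) :
    ∑' k', P k' * φ k' + ∑ k' ∈ Finset.univ.filter (fun k' => k < k'), P k' ≤ φ k := by
  have hle : ∀ k', P k' * ((φ k' : ℝ≥0∞) + if k < k' then 1 else 0) ≤ P k' * φ k := by
    intro k'
    rcases lt_trichotomy k' k with hlt | rfl | hgt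
    · simp [hmono k' hlt]
    · simp
    · gcongr
      rw [if_pos hgt]
      exact_mod_cast hφ hgt
  calc ∑' k', P k' * φ k' + ∑ k' ∈ Finset.univ.filter (fun k' => k < k'), P k'
      = ∑ k', P k' * ((φ k' : ℝ≥0∞) + if k < k' then 1 else 0) := by
        simp [Finset.sum_filter, mul_add, Finset.sum_add_distrib]
    _ ≤ ∑ k', P k' * φ k := Finset.sum_le_sum fun k' _ => hle k'
    _ = φ k := by
        rw [← Finset.sum_mul, ← tsum_fintype (L := .unconditional _), P.tsum_coe, one_mul]

end PMF

theorem markov_chain_progress_tendsto_one_general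
    (h : ℕ) (δ : ℝ) (hδ0 : 0 < δ)
    (K : Fin (h + 1) → PMF (Fin (h + 1)))
    (hmono : ∀ k k' : Fin (h + 1), k' < k → K k k' = 0)
    (hprog : ∀ k : Fin (h + 1), (k : ℕ) < h →
      ENNReal.ofReal δ ≤ ∑ k' ∈ Finset.univ.filter (fun k' : Fin (h + 1) => k < k'), K k k')
    (μ : ℕ → PMF (Fin (h + 1)))
    (hμ : ∀ n, μ (n + 1) = (μ n).bind K) :
    Filter.Tendsto (fun n => μ n (Fin.last h)) Filter.atTop (nhds 1) := by
  set g : Fin (h + 1) → ℝ≥0∞ := fun k => if k = Fin.last h then 0 else ENNReal.ofReal δ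
  have hdist : StrictAnti fun k : Fin (h + 1) => h - (k : ℕ) := fun a b hab => by
    show h - (b : ℕ) < h - a
    have := b.is_lt; rw [Fin.lt_def] at hab; omega
  have hdrift : ∀ k, ∑' k', K k k' * ((h - k' : ℕ) : ℝ≥0∞) + g k ≤ (h - k : ℕ) := by
    intro k
    refine le_trans ?_ ((K k).tsum_mul_add_sum_gt_le_of_strictAnti (hmono k) hdist)
    gcongr
    simp only [g]
    split_ifs with hk
    · exact zero_le
    · exact hprog k (Fin.val_lt_last hk)
  have hcost : ∑' n, ∑' k, μ n k * g k ≠ ∞ := by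
    refine ne_top_of_le_ne_top ?_ (PMF.tsum_tsum_mul_le_of_drift hμ hdrift)
    rw [tsum_fintype (L := .unconditional _)]
    exact ENNReal.sum_ne_top.2 fun k _ => ENNReal.mul_ne_top (PMF.apply_ne_top _ k)
      (ENNReal.natCast_ne_top _)
  have hδ : ENNReal.ofReal δ ≠ 0 := (ENNReal.ofReal_pos.2 hδ0).ne'
  have hmiss : Filter.Tendsto (fun n => 1 - μ n (Fin.last h)) Filter.atTop (nhds 0) := by
    have := ENNReal.Tendsto.const_mul (ENNReal.tendsto_atTop_zero_of_tsum_ne_top hcost)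
      (Or.inr (ENNReal.inv_ne_top.2 hδ))
    simpa only [g, PMF.tsum_mul_ite_eq_mul_one_sub, ← mul_assoc,
      ENNReal.inv_mul_cancel hδ ENNReal.ofReal_ne_top, one_mul, mul_zero] using this
  simpa [ENNReal.sub_sub_cancel ENNReal.one_ne_top (PMF.coe_le_one _ _)] using
    ENNReal.Tendsto.sub tendsto_const_nhds hmiss (Or.inl ENNReal.one_ne_top)

/-- A nondecreasing, δ-progressive Markov chain on `{0, …, h}` started at `0`
reaches the absorbing top state `h` with probability tending to `1`. -/
theorem markov_chain_progress_tendsto_one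
    (h : ℕ) (δ : ℝ) (hδ0 : 0 < δ) (hδ1 : δ ≤ 1)
    (K : Fin (h + 1) → PMF (Fin (h + 1)))
    (hmono : ∀ k k' : Fin (h + 1), k' < k → K k k' = 0)
    (hprog : ∀ k : Fin (h + 1), (k : ℕ) < h →
      ENNReal.ofReal δ ≤ ∑ k' ∈ Finset.univ.filter (fun k' : Fin (h + 1) => k < k'), K k k')
    (μ : ℕ → PMF (Fin (h + 1)))
    (hμ0 : μ 0 = PMF.pure 0)
    (hμ : ∀ n, μ (n + 1) = (μ n).bind K) :
    Filter.Tendsto (fun n => μ n (Fin.last h)) Filter.atTop (nhds 1) :=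
  markov_chain_progress_tendsto_one_general h δ hδ0 K hmono hprog μ hμ
end

section
/- Let (Ω, ℱ, P) be a probability space with a filtration (ℱ_n)_{n∈ℕ}, fix h : ℕ and δ ∈ (0,1], and let (X_n)_{n∈ℕ} be a sequence of ℕ-valued random variables such that: (i) X_n is ℱ_n-measurable for every n; (ii) X_0 = 0 and X_n ≤ X_{n+1} ≤ h pointwise; and (iii) for every n, almost surely δ · 1_{{X_n < h}} ≤ E[1_{{X_{n+1} > X_n}} | ℱ_n], i.e., conditioned on the past, the process strictly increases with probability at least δ whenever it is below h. Then P(∃ n, X_n = h) = 1. -/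
open MeasureTheory ProbabilityTheory Finset

/-! Integrating the hypothesis gives `δ · P(X_n < h) ≤ P(X_n < X_{n+1})`. Along every path the
process increases at most `h` times, so `∑_{n<N} P(X_n < X_{n+1}) ≤ h` for every `N`. The event
of never reaching `h` lies in each `{X_n < h}`, hence has probability at most `h / (δ N)` for
every `N`, i.e. probability zero. -/

lemma card_filter_lt_succ_add_le {a : ℕ → ℕ} (ha : Monotone a) (N : ℕ) :
    #{k ∈ range N | a k < a (k + 1)} + a 0 ≤ a N := by
  induction N with
  | zero => simp
  | succ N ih =>
    rw [range_add_one, filter_insert]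
    split_ifs with hN
    · grw [card_insert_le]; omega
    · have := ha (Nat.le_add_right N 1); omega

lemma mul_measureReal_le_of_le_condExp_indicator {Ω : Type*} {m m₀ : MeasurableSpace Ω}
    (hm : m ≤ m₀) {μ : Measure Ω} [IsFiniteMeasure μ] {s t : Set Ω}
    (hs : MeasurableSet s) (ht : MeasurableSet t) {c : ℝ}
    (hst : ∀ᵐ ω ∂μ, c * s.indicator 1 ω ≤ (μ[t.indicator 1 | m]) ω) :
    c * μ.real s ≤ μ.real t := by
  have := integral_mono_ae (((integrable_const 1).indicator hs).const_mul c) integrable_condExp hst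
  rwa [integral_condExp hm, integral_const_mul, integral_indicator_one hs,
    integral_indicator_one ht] at this

lemma sum_measureReal_lt_succ_le {Ω : Type*} [MeasurableSpace Ω] {μ : Measure Ω}
    [IsProbabilityMeasure μ] {X : ℕ → Ω → ℕ} (hX : ∀ n, Measurable (X n))
    (hmono : ∀ n ω, X n ω ≤ X (n + 1) ω) {h : ℕ} (hbd : ∀ n ω, X n ω ≤ h) (N : ℕ) :
    ∑ k ∈ range N, μ.real {ω | X k ω < X (k + 1) ω} ≤ h := by
  set B : ℕ → Set Ω := fun k => {ω | X k ω < X (k + 1) ω}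
  have hB : ∀ k, MeasurableSet (B k) := fun k => measurableSet_lt (hX k) (hX (k + 1))
  have hcount : ∀ ω, ∑ k ∈ range N, (B k).indicator 1 ω ≤ (h : ℝ) := by
    intro ω
    have := card_filter_lt_succ_add_le (monotone_nat_of_le_succ (hmono · ω)) N
    simp only [B, Set.indicator_apply, Set.mem_ofPred_eq, Pi.one_apply, sum_boole]
    exact_mod_cast (Nat.le_of_add_right_le this).trans (hbd N ω)
  calc ∑ k ∈ range N, μ.real (B k)
        = ∫ ω, ∑ k ∈ range N, (B k).indicator 1 ω ∂μ := by
        rw [integral_finsetSum _ fun k _ => (integrable_const 1).indicator (hB k)]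
        simp only [integral_indicator_one (hB _)]
    _ ≤ ∫ _, (h : ℝ) ∂μ :=
        integral_mono_of_nonneg
          (ae_of_all _ fun ω => sum_nonneg fun k _ =>
            Set.indicator_nonneg (fun _ _ => zero_le_one) ω)
          (integrable_const _) (ae_of_all _ hcount)
    _ = h := by simp

lemma nonpos_of_forall_nat_mul_le {α : Type*} [Field α] [LinearOrder α] [IsStrictOrderedRing α]
    [Archimedean α] {x c : α} (hx : ∀ N : ℕ, N * x ≤ c) : x ≤ 0 := by
  by_contra! hpos
  obtain ⟨N, hN⟩ := exists_nat_gt (c / x)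
  rw [div_lt_iff₀ hpos] at hN
  exact (hx N).not_gt hN

theorem adapted_progress_reaches_top_general
    {Ω : Type*} [m : MeasurableSpace Ω]
    (P : Measure Ω) [IsProbabilityMeasure P]
    (ℱ : Filtration ℕ m)
    (h : ℕ) (δ : ℝ) (hδ0 : 0 < δ)
    (X : ℕ → Ω → ℕ)
    (hadapted : ∀ n, Measurable[ℱ n] (X n))
    (hmono : ∀ n ω, X n ω ≤ X (n + 1) ω)
    (hbd : ∀ n ω, X n ω ≤ h)
    (hprog : ∀ n, ∀ᵐ ω ∂P,
      δ * Set.indicator {ω' | X n ω' < h} (fun _ => (1 : ℝ)) ω ≤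
        (P[Set.indicator {ω' | X n ω' < X (n + 1) ω'} (fun _ => (1 : ℝ)) | ℱ n]) ω) :
    P {ω | ∃ n, X n ω = h} = 1 := by
  have hX n : Measurable (X n) := (hadapted n).mono (ℱ.le n) le_rfl
  have hX_lt n : MeasurableSet {ω | X n ω < h} := measurableSet_lt (hX n) measurable_const
  set never := ⋂ n, {ω | X n ω < h}
  have hstep n : δ * P.real never ≤ P.real {ω | X n ω < X (n + 1) ω} :=
    (mul_le_mul_of_nonneg_left (measureReal_mono (Set.iInter_subset _ n)) hδ0.le).trans
      (mul_measureReal_le_of_le_condExp_indicator (ℱ.le n) (hX_lt n)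
        (measurableSet_lt (hX n) (hX (n + 1))) (hprog n))
  have hsum (N : ℕ) : N * (δ * P.real never) ≤ h := by
    simpa using (sum_le_sum fun k _ => hstep k).trans (sum_measureReal_lt_succ_le hX hmono hbd N)
  have hnever : P never = 0 := by
    have := nonpos_of_mul_nonpos_right (nonpos_of_forall_nat_mul_le hsum) hδ0
    exact (measureReal_eq_zero_iff).1 (this.antisymm measureReal_nonneg)
  have hreach : {ω | ∃ n, X n ω = h} = neverᶜ := by
    ext ω
    simp only [never, Set.compl_iInter, Set.mem_iUnion, Set.mem_compl_iff, Set.mem_ofPred_eq,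
      not_lt]
    exact exists_congr fun n => ⟨ge_of_eq, (hbd n ω).antisymm⟩
  rw [hreach, prob_compl_eq_one_iff (MeasurableSet.iInter hX_lt)]
  exact hnever

/-- An adapted, nondecreasing ℕ-valued process starting at `0`, bounded by `h`,
which strictly increases with conditional probability at least `δ` whenever it is
below `h`, almost surely reaches `h`. -/
theorem adapted_progress_reaches_top
    {Ω : Type*} [m : MeasurableSpace Ω]
    (P : Measure Ω) [IsProbabilityMeasure P]
    (ℱ : Filtration ℕ m)
    (h : ℕ) (δ : ℝ) (hδ0 : 0 < δ) (hδ1 : δ ≤ 1)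
    (X : ℕ → Ω → ℕ)
    (hadapted : ∀ n, Measurable[ℱ n] (X n))
    (hX0 : ∀ ω, X 0 ω = 0)
    (hmono : ∀ n ω, X n ω ≤ X (n + 1) ω)
    (hbd : ∀ n ω, X n ω ≤ h)
    (hprog : ∀ n, ∀ᵐ ω ∂P,
      δ * Set.indicator {ω' | X n ω' < h} (fun _ => (1 : ℝ)) ω ≤
        (P[Set.indicator {ω' | X n ω' < X (n + 1) ω'} (fun _ => (1 : ℝ)) | ℱ n]) ω) :
    P {ω | ∃ n, X n ω = h} = 1 :=
  adapted_progress_reaches_top_general (m := m) P ℱ h δ hδ0 X hadapted hmono hbd hprog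
end

section
/- Let (Ω, ℱ, P) be a probability space with a filtration (ℱ_n)_{n∈ℕ}, fix h : ℕ and δ ∈ (0,1], and let (X_n)_{n∈ℕ} be a sequence of ℕ-valued random variables such that: (i) X_n is ℱ_n-measurable for every n; (ii) X_0 = 0 and X_n ≤ X_{n+1} ≤ h pointwise; and (iii) for every n, almost surely δ · 1_{{X_n < h}} ≤ E[1_{{X_{n+1} > X_n}} | ℱ_n]. Let T = inf { n : X_n = h } be the hitting time of h. Then E[T] ≤ h/δ. -/
/-!
Since `X` is nondecreasing and bounded by `h`, the hitting time `T` equals the number of times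
`n` with `X n < h`, so `E[T] = ∑ₙ P(X n < h)`. Taking expectations in the progress hypothesis
gives `δ · P(X n < h) ≤ P(X n < X (n+1))`, and the number of strict increases of an `ℕ`-valued
nondecreasing sequence bounded by `h` is at most `h`, so `∑ₙ P(X n < X (n+1)) ≤ h`.
-/

open MeasureTheory ProbabilityTheory
open scoped ENNReal

open Finset in
theorem sum_range_ite_lt_succ_add_le {x : ℕ → ℕ} (hx : ∀ n, x n ≤ x (n + 1)) (N : ℕ) :
    ∑ n ∈ range N, (if x n < x (n + 1) then 1 else 0) + x 0 ≤ x N := by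
  induction N with
  | zero => simp
  | succ N ih =>
    rw [sum_range_succ]
    split_ifs <;> grind

theorem tsum_ite_lt_succ_le {x : ℕ → ℕ} (hx : ∀ n, x n ≤ x (n + 1)) {h : ℕ}
    (hb : ∀ n, x n ≤ h) :
    ∑' n, (if x n < x (n + 1) then 1 else 0 : ℝ≥0∞) ≤ h := by
  refine ENNReal.tsum_le_of_sum_range_le fun N => ?_
  have := (sum_range_ite_lt_succ_add_le hx N).trans (hb N)
  exact_mod_cast (Nat.le_add_right _ _).trans this

theorem tsum_ite_lt_eq_natCast (N : ℕ) :
    ∑' n : ℕ, (if n < N then 1 else 0 : ℝ≥0∞) = N := by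
  rw [tsum_eq_sum (s := Finset.range N) (fun n hn => if_neg (by simpa using hn))]
  simp [Finset.filter_true_of_mem fun n hn => Finset.mem_range.mp hn]

theorem sInf_hit_eq_tsum_ite_lt {x : ℕ → ℕ} (hx : Monotone x) {h : ℕ} (hb : ∀ n, x n ≤ h) :
    sInf {t : ℝ≥0∞ | ∃ n : ℕ, x n = h ∧ t = n} = ∑' n, (if x n < h then 1 else 0 : ℝ≥0∞) := by
  by_cases hhit : ∃ n, x n = h
  · have hlt : ∀ n, x n < h ↔ n < Nat.find hhit := fun n =>
      ⟨fun hn => lt_of_not_ge fun hN => hn.ne' (le_antisymm (Nat.find_spec hhit ▸ hx hN) (hb n)),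
       fun hn => (hb n).lt_of_ne (Nat.find_min hhit hn)⟩
    simp_rw [hlt, tsum_ite_lt_eq_natCast]
    refine le_antisymm (sInf_le ⟨_, Nat.find_spec hhit, rfl⟩) (le_sInf ?_)
    rintro _ ⟨n, hn, rfl⟩
    exact_mod_cast Nat.find_min' hhit hn
  · push Not at hhit
    have hlt : ∀ n, x n < h := fun n => (hb n).lt_of_ne (hhit n)
    simp [hlt, hhit]

theorem ofReal_mul_measure_le_of_le_condExp_indicator {Ω : Type*} {m m₀ : MeasurableSpace Ω}
    {μ : Measure Ω} [IsFiniteMeasure μ] (hm : m ≤ m₀) {s t : Set Ω} (hs : MeasurableSet s)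
    (ht : MeasurableSet t) {c : ℝ}
    (hc : ∀ᵐ ω ∂μ, c * s.indicator 1 ω ≤ μ[t.indicator 1 | m] ω) :
    ENNReal.ofReal c * μ s ≤ μ t := by
  have hreal : c * μ.real s ≤ μ.real t := calc
    c * μ.real s = ∫ ω, c * s.indicator 1 ω ∂μ := by
      rw [integral_const_mul, integral_indicator_one hs]
    _ ≤ ∫ ω, μ[t.indicator 1 | m] ω ∂μ :=
      integral_mono_ae (((integrable_const 1).indicator hs).const_mul c) integrable_condExp hc
    _ = μ.real t := by rw [integral_condExp hm, integral_indicator_one ht]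
  rw [← ofReal_measureReal (measure_ne_top μ s), ← ofReal_measureReal (measure_ne_top μ t),
    ← ENNReal.ofReal_mul' measureReal_nonneg]
  exact ENNReal.ofReal_le_ofReal hreal

theorem lintegral_tsum_indicator_one {α : Type*} [MeasurableSpace α] {μ : Measure α}
    {s : ℕ → Set α} (hs : ∀ n, MeasurableSet (s n)) :
    ∫⁻ a, ∑' n, (s n).indicator 1 a ∂μ = ∑' n, μ (s n) := by
  rw [lintegral_tsum fun n => (measurable_one.indicator (hs n)).aemeasurable]
  exact tsum_congr fun n => lintegral_indicator_one (hs n)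

theorem adapted_progress_hitting_time_expectation_general
    {Ω : Type*} [m : MeasurableSpace Ω]
    (P : Measure Ω) [IsProbabilityMeasure P]
    (ℱ : Filtration ℕ m)
    (h : ℕ) (δ : ℝ) (hδ0 : 0 < δ)
    (X : ℕ → Ω → ℕ)
    (hadapted : ∀ n, Measurable[ℱ n] (X n))
    (hmono : ∀ n ω, X n ω ≤ X (n + 1) ω)
    (hbd : ∀ n ω, X n ω ≤ h)
    (hprog : ∀ n, ∀ᵐ ω ∂P,
      δ * Set.indicator {ω' | X n ω' < h} (fun _ => (1 : ℝ)) ω ≤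
        (P[Set.indicator {ω' | X n ω' < X (n + 1) ω'} (fun _ => (1 : ℝ)) | ℱ n]) ω)
    (T : Ω → ℝ≥0∞)
    (hT : ∀ ω, T ω = sInf {t : ℝ≥0∞ | ∃ n : ℕ, X n ω = h ∧ t = (n : ℝ≥0∞)}) :
    ∫⁻ ω, T ω ∂P ≤ ENNReal.ofReal ((h : ℝ) / δ) := by
  set below : ℕ → Set Ω := fun n => {ω | X n ω < h}
  set rises : ℕ → Set Ω := fun n => {ω | X n ω < X (n + 1) ω}
  have hX : ∀ n, Measurable (X n) := fun n => (hadapted n).mono (ℱ.le n) le_rfl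
  have hbelow : ∀ n, MeasurableSet (below n) := fun n => measurableSet_lt (hX n) measurable_const
  have hrises : ∀ n, MeasurableSet (rises n) := fun n => measurableSet_lt (hX n) (hX (n + 1))
  have hT_count : ∀ ω, T ω = ∑' n, (below n).indicator 1 ω := fun ω => by
    simp only [hT ω, below, Set.indicator_apply, Set.mem_ofPred_eq, Pi.one_apply]
    exact sInf_hit_eq_tsum_ite_lt (monotone_nat_of_le_succ (hmono · ω)) (hbd · ω)
  have hrises_count : ∀ ω, ∑' n, (rises n).indicator 1 ω ≤ (h : ℝ≥0∞) := fun ω => by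
    simp only [rises, Set.indicator_apply, Set.mem_ofPred_eq, Pi.one_apply]
    exact tsum_ite_lt_succ_le (hmono · ω) (hbd · ω)
  have hstep : ∀ n, ENNReal.ofReal δ * P (below n) ≤ P (rises n) := fun n =>
    ofReal_mul_measure_le_of_le_condExp_indicator (ℱ.le n) (hbelow n) (hrises n) (hprog n)
  calc ∫⁻ ω, T ω ∂P = ∑' n, P (below n) := by
        simp_rw [hT_count]
        exact lintegral_tsum_indicator_one hbelow
    _ ≤ h / ENNReal.ofReal δ := by
        rw [ENNReal.le_div_iff_mul_le (.inl (by simpa)) (.inl ENNReal.ofReal_ne_top), mul_comm,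
          ← ENNReal.tsum_mul_left]
        calc ∑' n, ENNReal.ofReal δ * P (below n) ≤ ∑' n, P (rises n) :=
              ENNReal.tsum_le_tsum hstep
          _ = ∫⁻ ω, ∑' n, (rises n).indicator 1 ω ∂P := (lintegral_tsum_indicator_one hrises).symm
          _ ≤ h := (lintegral_mono hrises_count).trans_eq (by simp)
    _ = ENNReal.ofReal ((h : ℝ) / δ) := by
        rw [ENNReal.ofReal_div_of_pos hδ0, ENNReal.ofReal_natCast]

/-- Quantitative version: an adapted, nondecreasing ℕ-valued process starting at
`0`, bounded by `h`, which strictly increases with conditional probability at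
least `δ` whenever it is below `h`, hits `h` at a time `T` with `E[T] ≤ h / δ`
(where `T = ∞` if `h` is never reached). -/
theorem adapted_progress_hitting_time_expectation
    {Ω : Type*} [m : MeasurableSpace Ω]
    (P : Measure Ω) [IsProbabilityMeasure P]
    (ℱ : Filtration ℕ m)
    (h : ℕ) (δ : ℝ) (hδ0 : 0 < δ) (hδ1 : δ ≤ 1)
    (X : ℕ → Ω → ℕ)
    (hadapted : ∀ n, Measurable[ℱ n] (X n))
    (hX0 : ∀ ω, X 0 ω = 0)
    (hmono : ∀ n ω, X n ω ≤ X (n + 1) ω)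
    (hbd : ∀ n ω, X n ω ≤ h)
    (hprog : ∀ n, ∀ᵐ ω ∂P,
      δ * Set.indicator {ω' | X n ω' < h} (fun _ => (1 : ℝ)) ω ≤
        (P[Set.indicator {ω' | X n ω' < X (n + 1) ω'} (fun _ => (1 : ℝ)) | ℱ n]) ω)
    (T : Ω → ℝ≥0∞)
    (hT : ∀ ω, T ω = sInf {t : ℝ≥0∞ | ∃ n : ℕ, X n ω = h ∧ t = (n : ℝ≥0∞)}) :
    ∫⁻ ω, T ω ∂P ≤ ENNReal.ofReal ((h : ℝ) / δ) :=
  adapted_progress_hitting_time_expectation_general (m := m) P ℱ h δ hδ0 X hadapted hmono hbd hprog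
    T hT
end
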